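/- For n ≥ 0 and 1 ≤ k ≤ n+1, the integral L_{n+1,k} := ∫_{0<x_1<...<x_{n+1}} x_k e^{-(x_1+...+x_{n+1})} dx equals (H_{n+1} - H_{n+1-k})/(n+1)!, where H_j is the j-th harmonic number. -/

import Mathlib

/-!
In the gaps `yⱼ = xⱼ - xⱼ₋₁` (with `x₀ = 0`) the simplex becomes the positive orthant, by a
linear change of variables with unit lower-triangular matrix, hence of Jacobian one. Then
`x_k = y₁ + ⋯ + y_k` and `x₁ + ⋯ + x_{n+1} = ∑ⱼ (n + 2 - j) yⱼ`, so the integral splits into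
`k` integrals over the orthant, each a product of one-dimensional Gamma integrals: the one
of `yⱼ` equals `(n + 2 - j)⁻¹ / (n + 1)!`, and `∑_{j ≤ k} (n + 2 - j)⁻¹ = H_{n+1} - H_{n+1-k}`.
-/

open MeasureTheory Finset Real
open scoped Matrix Nat

def partialSumMatrix (n : ℕ) : Matrix (Fin n) (Fin n) ℝ :=
  Matrix.of fun i j => if j ≤ i then 1 else 0

section partialSumMatrix

variable {n : ℕ}

lemma partialSumMatrix_mulVec_apply (y : Fin n → ℝ) (i : Fin n) :
    (partialSumMatrix n *ᵥ y) i = ∑ j ∈ Iic i, y j := by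
  simp [partialSumMatrix, Matrix.mulVec, dotProduct, ite_mul, ← sum_filter, filter_ge_eq_Iic]

lemma det_partialSumMatrix : (partialSumMatrix n).det = 1 := by
  have h : (partialSumMatrix n).IsLowerTriangular := fun i j h => if_neg (not_le.2 h)
  rw [Matrix.det_of_isLowerTriangular _ h]
  simp [partialSumMatrix]

lemma measurePreserving_partialSumMatrix_mulVec :
    MeasurePreserving (partialSumMatrix n).mulVec volume volume := by
  refine ⟨(Matrix.toLin' (partialSumMatrix n)).continuous_of_finiteDimensional.measurable, ?_⟩
  have h := Real.map_matrix_volume_pi_eq_smul_volume_pi (M := partialSumMatrix n)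
    (by simp [det_partialSumMatrix])
  rwa [det_partialSumMatrix, inv_one, abs_one, ENNReal.ofReal_one, one_smul] at h

lemma measurableEmbedding_partialSumMatrix_mulVec :
    MeasurableEmbedding (partialSumMatrix n).mulVec := by
  have hinj : Function.Injective (partialSumMatrix n).mulVec :=
    Matrix.mulVec_injective_iff_isUnit.2
      ((Matrix.isUnit_iff_isUnit_det _).2 (by simp [det_partialSumMatrix]))
  exact (LinearMap.isClosedEmbedding_of_injective (f := Matrix.toLin' (partialSumMatrix n))
    (LinearMap.ker_eq_bot.2 hinj)).measurableEmbedding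

lemma partialSumMatrix_mulVec_zero (y : Fin (n + 1) → ℝ) :
    (partialSumMatrix (n + 1) *ᵥ y) 0 = y 0 := by
  rw [partialSumMatrix_mulVec_apply, ← bot_eq_zero, Iic_bot, sum_singleton]

lemma partialSumMatrix_mulVec_succ (y : Fin (n + 1) → ℝ) (i : Fin n) :
    (partialSumMatrix (n + 1) *ᵥ y) i.succ
      = (partialSumMatrix (n + 1) *ᵥ y) i.castSucc + y i.succ := by
  have h : Iio i.succ = Iic i.castSucc := by ext j; simp [Fin.lt_def, Fin.le_def]
  rw [partialSumMatrix_mulVec_apply, partialSumMatrix_mulVec_apply, ← Iio_insert,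
    sum_insert (by simp), h, add_comm]

lemma sum_partialSumMatrix_mulVec (y : Fin n → ℝ) :
    ∑ i, (partialSumMatrix n *ᵥ y) i = ∑ j : Fin n, ((n - j : ℕ) : ℝ) * y j := by
  simp_rw [partialSumMatrix_mulVec_apply]
  rw [sum_comm' (t' := univ) (s' := fun j => Ici j) (by simp)]
  simp

lemma preimage_partialSumMatrix_mulVec_simplex :
    (partialSumMatrix (n + 1)).mulVec ⁻¹' {x | 0 < x 0 ∧ StrictMono x}
      = Set.univ.pi fun _ => Set.Ioi 0 := by
  ext y
  simp only [Set.mem_preimage, Set.mem_ofPred_eq, Set.mem_univ_pi, Set.mem_Ioi,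
    Fin.strictMono_iff_lt_succ, partialSumMatrix_mulVec_zero, partialSumMatrix_mulVec_succ,
    lt_add_iff_pos_right]
  constructor
  · rintro ⟨h0, hsucc⟩ j
    induction j using Fin.cases with
    | zero => exact h0
    | succ i => exact hsucc i
  · exact fun h => ⟨h 0, fun i => h i.succ⟩

end partialSumMatrix

lemma integral_pow_mul_exp_neg_mul_Ioi (m : ℕ) {c : ℝ} (hc : 0 < c) :
    ∫ t in Set.Ioi 0, t ^ m * exp (-(c * t)) = m ! / c ^ (m + 1) := by
  have h := integral_rpow_mul_exp_neg_mul_Ioi (a := m + 1) (by positivity) hc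
  rw [add_sub_cancel_right, Gamma_nat_eq_factorial, ← Nat.cast_succ, rpow_natCast] at h
  simp_rw [rpow_natCast] at h
  rw [h, one_div_pow, one_div, inv_mul_eq_div]

section Orthant

variable {ι : Type*} [Fintype ι] {c : ι → ℝ}

lemma integral_orthant_prod_pow_mul_exp_neg (m : ι → ℕ) (hc : ∀ i, 0 < c i) :
    ∫ y in Set.univ.pi fun _ => Set.Ioi 0, (∏ i, y i ^ m i) * exp (-∑ i, c i * y i)
      = ∏ i, (m i)! / c i ^ (m i + 1) := by
  have hprod : ∀ y : ι → ℝ, (∏ i, y i ^ m i) * exp (-∑ i, c i * y i)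
      = ∏ i, y i ^ m i * exp (-(c i * y i)) := fun y => by
    rw [← sum_neg_distrib, exp_sum, prod_mul_distrib]
  simp_rw [hprod]
  rw [volume_pi, Measure.restrict_pi_pi,
    integral_fintype_prod_eq_prod (fun i t => t ^ m i * exp (-(c i * t)))]
  simp_rw [integral_pow_mul_exp_neg_mul_Ioi _ (hc _)]

lemma integral_orthant_apply_mul_exp_neg [DecidableEq ι] (j : ι) (hc : ∀ i, 0 < c i) :
    ∫ y in Set.univ.pi fun _ => Set.Ioi 0, y j * exp (-∑ i, c i * y i)
      = (c j)⁻¹ * ∏ i, (c i)⁻¹ := by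
  have h := integral_orthant_prod_pow_mul_exp_neg (Pi.single j 1) hc
  simp only [Pi.single_apply, pow_ite, pow_one, pow_zero, prod_ite_eq', mem_univ, ite_true] at h
  have hfactor : ∀ i, ((if i = j then 1 else 0) ! : ℝ) / c i ^ ((if i = j then 1 else 0) + 1)
      = (if i = j then (c i)⁻¹ else 1) * (c i)⁻¹ := fun i => by
    split_ifs <;> simp [div_eq_mul_inv, pow_two]
  simp_rw [h, hfactor, prod_mul_distrib, prod_ite_eq', mem_univ, ite_true]

end Orthant

lemma sum_range_inv_sub_eq_harmonic_sub {m k : ℕ} (hk : k ≤ m) :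
    ∑ j ∈ range k, ((m - j : ℕ) : ℝ)⁻¹ = harmonic m - harmonic (m - k) := by
  induction k with
  | zero => simp
  | succ k ih =>
    obtain ⟨l, hl⟩ : ∃ l, m - k = l + 1 := ⟨m - k - 1, by omega⟩
    rw [sum_range_succ, ih (by omega), hl, show m - (k + 1) = l by omega, harmonic_succ]
    push_cast
    ring

lemma sum_Iic_inv_sub_eq_harmonic_sub {m : ℕ} (i : Fin m) :
    ∑ j ∈ Iic i, ((m - j : ℕ) : ℝ)⁻¹ = harmonic m - harmonic (m - (i + 1)) := by
  rw [← sum_range_inv_sub_eq_harmonic_sub i.isLt, Nat.range_succ_eq_Iic,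
    ← Fin.map_valEmbedding_Iic, sum_map]
  rfl

lemma prod_fin_sub_eq_factorial (m : ℕ) : ∏ i : Fin m, ((m - i : ℕ) : ℝ) = m ! := by
  rw [← Nat.cast_prod, Fin.prod_univ_eq_prod_range (m - ·), ← Nat.descFactorial_eq_prod_range,
    Nat.descFactorial_self]

/-- For `1 ≤ k ≤ n+1`, `∫_{0<x₁<⋯<x_{n+1}} x_k e^{-(x₁+⋯+x_{n+1})} dx
= (H_{n+1} - H_{n+1-k})/(n+1)!`. -/
theorem integral_coordinate_exp_over_simplex (n k : ℕ) (hk1 : 1 ≤ k) (hk2 : k ≤ n + 1) :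
    ∫ x in {x : Fin (n + 1) → ℝ | 0 < x 0 ∧ StrictMono x},
        x ⟨k - 1, by omega⟩ * Real.exp (-∑ i, x i) ∂(volume : Measure (Fin (n + 1) → ℝ))
      = ((harmonic (n + 1) : ℝ) - (harmonic (n + 1 - k) : ℝ))
          / (Nat.factorial (n + 1)) := by
  have hc (j : Fin (n + 1)) : (0 : ℝ) < (n + 1 - j : ℕ) :=
    Nat.cast_pos.2 (Nat.sub_pos_of_lt j.isLt)
  have hgap (j : Fin (n + 1)) :
      ∫ y in Set.univ.pi fun _ => Set.Ioi 0,
          y j * exp (-∑ i : Fin (n + 1), ((n + 1 - i : ℕ) : ℝ) * y i)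
        = ((n + 1 - j : ℕ) : ℝ)⁻¹ * ((n + 1)! : ℝ)⁻¹ := by
    rw [integral_orthant_apply_mul_exp_neg j hc, prod_inv_distrib, prod_fin_sub_eq_factorial]
  rw [← measurePreserving_partialSumMatrix_mulVec.setIntegral_preimage_emb
    measurableEmbedding_partialSumMatrix_mulVec, preimage_partialSumMatrix_mulVec_simplex]
  simp_rw [partialSumMatrix_mulVec_apply _ ⟨k - 1, _⟩, sum_partialSumMatrix_mulVec, sum_mul]
  rw [integral_finsetSum _ fun j _ => .of_integral_ne_zero <| by
    rw [hgap]; exact mul_ne_zero (inv_ne_zero (hc j).ne') (by positivity)]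
  simp_rw [hgap]
  rw [← sum_mul, sum_Iic_inv_sub_eq_harmonic_sub, Fin.val_mk, Nat.sub_add_cancel hk1,
    div_eq_mul_inv]
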